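/- There exist two non-congruent triangles, each with all three sides perfect squares of positive integers, having the same perimeter and the same area. -/

import Mathlib

/-- A triangle with integer sides: positive sides satisfying the strict triangle
inequalities. -/
structure IntTriangle where
  x : ℤ
  y : ℤ
  z : ℤ
  hx : 0 < x
  hy : 0 < y
  hz : 0 < z
  t1 : x < y + z
  t2 : y < x + z
  t3 : z < x + y

/-- The perimeter of an integer triangle. -/
def IntTriangle.perimeter (T : IntTriangle) : ℤ := T.x + T.y + T.z

/-- The area of a triangle via Heron's formula. -/
noncomputable def IntTriangle.area (T : IntTriangle) : ℝ :=
  Real.sqrt (((T.x : ℝ) + T.y + T.z) * (T.x + T.y - T.z) * (T.x - T.y + T.z)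
    * (-(T.x : ℝ) + T.y + T.z)) / 4

/-- Two triangles are congruent iff their multisets of side lengths agree. -/
def IntTriangle.Congruent (T₁ T₂ : IntTriangle) : Prop :=
  ({T₁.x, T₁.y, T₁.z} : Multiset ℤ) = {T₂.x, T₂.y, T₂.z}

/-- All sides are perfect squares of positive integers. -/
def IntTriangle.SquareSides (T : IntTriangle) : Prop :=
  (∃ a : ℤ, 0 < a ∧ T.x = a^2) ∧ (∃ b : ℤ, 0 < b ∧ T.y = b^2) ∧
    (∃ c : ℤ, 0 < c ∧ T.z = c^2)

namespace IntTriangle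

def heronProduct (T : IntTriangle) : ℤ :=
  (T.x + T.y + T.z) * (T.x + T.y - T.z) * (T.x - T.y + T.z) * (-T.x + T.y + T.z)

theorem area_eq_sqrt_heronProduct (T : IntTriangle) :
    T.area = Real.sqrt (T.heronProduct : ℝ) / 4 := by
  simp only [area, heronProduct]
  push_cast
  rfl

theorem area_eq_area_of_heronProduct_eq {T₁ T₂ : IntTriangle}
    (h : T₁.heronProduct = T₂.heronProduct) : T₁.area = T₂.area := by
  rw [area_eq_sqrt_heronProduct, area_eq_sqrt_heronProduct, h]

theorem Congruent.x_mem {T₁ T₂ : IntTriangle} (h : T₁.Congruent T₂) :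
    T₁.x ∈ ({T₂.x, T₂.y, T₂.z} : Multiset ℤ) := by
  unfold Congruent at h
  rw [← h]
  exact Multiset.mem_cons_self _ _

def ofSquares (a b c : ℤ) (ha : 0 < a) (hb : 0 < b) (hc : 0 < c)
    (h₁ : a ^ 2 < b ^ 2 + c ^ 2) (h₂ : b ^ 2 < a ^ 2 + c ^ 2) (h₃ : c ^ 2 < a ^ 2 + b ^ 2) :
    IntTriangle :=
  ⟨a ^ 2, b ^ 2, c ^ 2, by positivity, by positivity, by positivity, h₁, h₂, h₃⟩

theorem squareSides_ofSquares (a b c : ℤ) (ha : 0 < a) (hb : 0 < b) (hc : 0 < c)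
    (h₁ : a ^ 2 < b ^ 2 + c ^ 2) (h₂ : b ^ 2 < a ^ 2 + c ^ 2) (h₃ : c ^ 2 < a ^ 2 + b ^ 2) :
    (ofSquares a b c ha hb hc h₁ h₂ h₃).SquareSides :=
  ⟨⟨a, ha, rfl⟩, ⟨b, hb, rfl⟩, ⟨c, hc, rfl⟩⟩

end IntTriangle

theorem stmt4 :
    ∃ T₁ T₂ : IntTriangle, ¬ T₁.Congruent T₂ ∧ T₁.SquareSides ∧ T₂.SquareSides ∧
      T₁.perimeter = T₂.perimeter ∧ T₁.area = T₂.area := by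
  let T₁ := IntTriangle.ofSquares 661 1498 1515 (by norm_num) (by norm_num) (by norm_num)
    (by norm_num) (by norm_num) (by norm_num)
  let T₂ := IntTriangle.ofSquares 921 1310 1553 (by norm_num) (by norm_num) (by norm_num)
    (by norm_num) (by norm_num) (by norm_num)
  have not_congruent : ¬ T₁.Congruent T₂ := fun h => by
    have := h.x_mem
    simp [T₁, T₂, IntTriangle.ofSquares] at this
  have same_heronProduct : T₁.heronProduct = T₂.heronProduct := by
    simp only [T₁, T₂, IntTriangle.heronProduct, IntTriangle.ofSquares]
    norm_num
  exact ⟨T₁, T₂, not_congruent, IntTriangle.squareSides_ofSquares ..,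
    IntTriangle.squareSides_ofSquares .., rfl,
    IntTriangle.area_eq_area_of_heronProduct_eq same_heronProduct⟩
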